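/- arXiv:math/0102199 — 5 statements merged into one kernel-verified Lean document; each statement's English description precedes it below -/
import Mathlib

section
/- Let A be a finite vertex set and let S be an i-isolated core that is not a subset of A. Then Δ_i(A ∪ S) > Δ_i(A). -/
open scoped BigOperators Classical
open Filter MeasureTheory

variable {V : Type*}

/-- Vertex weight: sum of incident edge weights. -/
noncomputable def vtxWeight (w : V → V → ℝ) (v : V) : ℝ := ∑' u, w v u

/-- Volume of a finite vertex set. -/
noncomputable def vol (w : V → V → ℝ) (S : Finset V) : ℝ := ∑ v ∈ S, vtxWeight w v

/-- Volume of the edge boundary of a finite vertex set. -/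
noncomputable def bdry (w : V → V → ℝ) (S : Finset V) : ℝ :=
  ∑ v ∈ S, ∑' u, ((↑S : Set V)ᶜ).indicator (w v) u

/-- The `i`-isolation `Δ_i S = i|S| - |∂S|`. -/
noncomputable def isol (i : ℝ) (w : V → V → ℝ) (S : Finset V) : ℝ :=
  i * vol w S - bdry w S

/-- An `i`-isolated core: `Δ_i` strictly dominates `Δ_i` of every proper subset. -/
def IsCore (i : ℝ) (w : V → V → ℝ) (S : Finset V) : Prop :=
  ∀ A : Finset V, A ⊂ S → isol i w A < isol i w S

/-- The union `A_i` of all `i`-isolated cores. -/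
def coreUnion (i : ℝ) (w : V → V → ℝ) : Set V :=
  {v | ∃ S : Finset V, IsCore i w S ∧ v ∈ S}

/-- The underlying graph of a weighted graph: adjacency iff positive weight. -/
noncomputable def gra (w : V → V → ℝ) : SimpleGraph V :=
  SimpleGraph.fromRel (fun u v => 0 < w u v)

/-- A set of vertices is connected if its induced subgraph is connected. -/
def ConnSet (w : V → V → ℝ) (S : Set V) : Prop :=
  (SimpleGraph.induce S (gra w)).Connected

/-- `i`-anchored expansion: every vertex lies in only finitely many connected
finite vertex sets with positive `i`-isolation. -/
def Anchored (i : ℝ) (w : V → V → ℝ) : Prop :=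
  ∀ v : V, {S : Finset V | v ∈ S ∧ ConnSet w (↑S) ∧ 0 < isol i w S}.Finite

/-- An `i`-island: a connected component of `A_i`. -/
def IsIsland (i : ℝ) (w : V → V → ℝ) (C : Set V) : Prop :=
  C.Nonempty ∧ C ⊆ coreUnion i w ∧ ConnSet w C ∧
    ∀ C' : Set V, C ⊆ C' → C' ⊆ coreUnion i w → ConnSet w C' → C' = C

/-- Transition kernel of the random walk on the weighted graph. -/
noncomputable def markov (w : V → V → ℝ) (u v : V) : ℝ := w u v / vtxWeight w u

/-- `n`-step transition kernel of a Markov kernel `p`. -/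
noncomputable def kern (p : V → V → ℝ) : ℕ → V → V → ℝ
  | 0, x, y => if x = y then 1 else 0
  | n + 1, x, y => ∑' z, p x z * kern p n z y

/-- Auxiliary: boundary contribution of one vertex. -/
noncomputable def phiAux (w : V → V → ℝ) (v : V) (X : Finset V) : ℝ :=
  ∑' u, ((↑X : Set V)ᶜ).indicator (w v) u

lemma phiAux_summable (w : V → V → ℝ) (hsum : ∀ v, Summable (w v)) (v : V) (X : Finset V) :
    Summable (((↑X : Set V)ᶜ).indicator (w v)) := (hsum v).indicator _

lemma phiAux_mono (w : V → V → ℝ) (hnn : ∀ u v, 0 ≤ w u v) (hsum : ∀ v, Summable (w v))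
    (v : V) {X Y : Finset V} (hXY : X ⊆ Y) : phiAux w v Y ≤ phiAux w v X := by
  refine Summable.tsum_le_tsum ?_ (phiAux_summable w hsum v Y) (phiAux_summable w hsum v X)
  intro u
  by_cases hu : u ∈ Y
  · have : u ∈ (↑Y : Set V) := hu
    simp only [Set.indicator_apply, Set.mem_compl_iff, this, not_true, if_false,
      Finset.mem_coe]
    split_ifs <;> simp [hnn v u]
  · have hx : u ∉ X := fun h => hu (hXY h)
    simp [Set.indicator_apply, hu, hx]

lemma phiAux_modular (w : V → V → ℝ) (hsum : ∀ v, Summable (w v)) (v : V)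
    [DecidableEq V] (A S : Finset V) :
    phiAux w v (A ∪ S) + phiAux w v (A ∩ S) = phiAux w v A + phiAux w v S := by
  unfold phiAux
  rw [← Summable.tsum_add (phiAux_summable w hsum v (A ∪ S)) (phiAux_summable w hsum v (A ∩ S)),
    ← Summable.tsum_add (phiAux_summable w hsum v A) (phiAux_summable w hsum v S)]
  refine tsum_congr fun u => ?_
  by_cases hA : u ∈ A <;> by_cases hS : u ∈ S <;>
    simp [Set.indicator_apply, hA, hS]

lemma bdry_repr (w : V → V → ℝ) [DecidableEq V] {X T : Finset V} (hXT : X ⊆ T) :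
    bdry w X = ∑ v ∈ T, if v ∈ X then phiAux w v X else 0 := by
  rw [Finset.sum_ite_mem, Finset.inter_eq_right.mpr hXT]
  rfl

lemma bdry_submod (w : V → V → ℝ) (hnn : ∀ u v, 0 ≤ w u v) (hsum : ∀ v, Summable (w v))
    [DecidableEq V] (A S : Finset V) :
    bdry w (A ∪ S) + bdry w (A ∩ S) ≤ bdry w A + bdry w S := by
  rw [bdry_repr w (Finset.Subset.refl (A ∪ S)),
    bdry_repr w (Finset.inter_subset_union (s := A) (t := S)),
    bdry_repr w ((Finset.subset_union_left : A ⊆ A ∪ S)),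
    bdry_repr w ((Finset.subset_union_right : S ⊆ A ∪ S)),
    ← Finset.sum_add_distrib, ← Finset.sum_add_distrib]
  refine Finset.sum_le_sum fun v hv => ?_
  by_cases hA : v ∈ A <;> by_cases hSv : v ∈ S
  · simp only [hA, hSv, Finset.mem_union, Finset.mem_inter, true_or, and_self, if_true]
    exact le_of_eq (phiAux_modular w hsum v A S)
  · simp only [hA, hSv, Finset.mem_union, Finset.mem_inter, true_or, and_false, if_true,
      if_false, add_zero]
    exact phiAux_mono w hnn hsum v (Finset.subset_union_left)
  · simp only [hA, hSv, Finset.mem_union, Finset.mem_inter, or_true, false_and, if_true,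
      if_false, add_zero, zero_add]
    exact phiAux_mono w hnn hsum v (Finset.subset_union_right)
  · simp [Finset.mem_union, Finset.mem_inter, hA, hSv]

theorem core_grows [DecidableEq V] (w : V → V → ℝ)
    (hsymm : ∀ u v, w u v = w v u) (hnn : ∀ u v, 0 ≤ w u v)
    (hsum : ∀ v, Summable (w v)) (i : ℝ) (hi0 : 0 < i) (hi1 : i < 1)
    (A S : Finset V) (hS : IsCore i w S) (hns : ¬ S ⊆ A) :
    isol i w A < isol i w (A ∪ S) := by
  have hvol : vol w (A ∪ S) + vol w (A ∩ S) = vol w A + vol w S :=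
    Finset.sum_union_inter
  have hvol' : i * vol w (A ∪ S) + i * vol w (A ∩ S) = i * vol w A + i * vol w S := by
    rw [← mul_add, ← mul_add, hvol]
  have hb := bdry_submod w hnn hsum A S
  have hss : A ∩ S ⊂ S := by
    refine ⟨Finset.inter_subset_right, fun h => hns fun x hx => ?_⟩
    exact Finset.mem_of_mem_inter_left (h hx)
  have hcore := hS (A ∩ S) hss
  simp only [isol] at *
  linarith
end

section
/- The union of finitely many i-isolated cores is again an i-isolated core. -/
open scoped BigOperators Classical
open Filter MeasureTheory

variable {V : Type*}

/-!
`Δ_i` is supermodular: writing `|∂S| = |S| - W(S)` with `W(S)` the weight of the ordered pairs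
inside `S`, we get `Δ_i = (i - 1)|S| + W(S)`, where `|·|` is modular and `W` is supermodular since
`(S ∪ T)² ⊇ S² ∪ T²`, `(S ∩ T)² = S² ∩ T²` and `w ≥ 0`.
For any supermodular `f`, if `S` strictly dominates its proper subsets then
`f A ≤ f (A ∪ S)`, strictly unless `S ⊆ A`. Applying this to a proper subset `A` of `S ∪ T`,
first with `S` and then with `T`, gives `f A < f (S ∪ T)`; finite unions follow by induction.
-/

section Supermodular

variable {α : Type*} [DecidableEq α] {f : Finset α → ℝ} {S T A : Finset α}

theorem lt_union_of_not_subset (hf : ∀ S T, f S + f T ≤ f (S ∪ T) + f (S ∩ T))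
    (hS : ∀ B ⊂ S, f B < f S) (hA : ¬S ⊆ A) : f A < f (A ∪ S) := by
  have := hS (A ∩ S) (Finset.inter_subset_right.ssubset_of_not_subset
    fun h => hA (h.trans Finset.inter_subset_left))
  linarith [hf A S]

theorem le_union_of_forall_ssubset_lt (hf : ∀ S T, f S + f T ≤ f (S ∪ T) + f (S ∩ T))
    (hS : ∀ B ⊂ S, f B < f S) (A : Finset α) : f A ≤ f (A ∪ S) := by
  by_cases hA : S ⊆ A
  · rw [Finset.union_eq_left.2 hA]
  · exact (lt_union_of_not_subset hf hS hA).le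

theorem forall_ssubset_union_lt (hf : ∀ S T, f S + f T ≤ f (S ∪ T) + f (S ∩ T))
    (hS : ∀ B ⊂ S, f B < f S) (hT : ∀ B ⊂ T, f B < f T) :
    ∀ A ⊂ S ∪ T, f A < f (S ∪ T) := by
  intro A hA
  have hAST : A ∪ S ∪ T = S ∪ T := by
    rw [Finset.union_assoc, Finset.union_eq_right.2 hA.subset]
  by_cases hSA : S ⊆ A
  · have hTA : ¬T ⊆ A ∪ S := fun hT' =>
      hA.not_subset (Finset.union_subset hSA (by simpa [Finset.union_eq_left.2 hSA] using hT'))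
    simpa [hAST] using (le_union_of_forall_ssubset_lt hf hS A).trans_lt
      (lt_union_of_not_subset hf hT hTA)
  · simpa [hAST] using (lt_union_of_not_subset hf hS hSA).trans_le
      (le_union_of_forall_ssubset_lt hf hT (A ∪ S))

end Supermodular

section Isolation

variable {w : V → V → ℝ}

/-- For symmetric `w`, twice the weight of the edges inside `S`. -/
noncomputable def internalWeight (w : V → V → ℝ) (S : Finset V) : ℝ :=
  ∑ p ∈ S ×ˢ S, w p.1 p.2

theorem bdry_eq_vol_sub_internalWeight (hsum : ∀ v, Summable (w v)) (S : Finset V) :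
    bdry w S = vol w S - internalWeight w S := by
  rw [internalWeight, Finset.sum_product', vol, bdry, ← Finset.sum_sub_distrib]
  refine Finset.sum_congr rfl fun v _ => ?_
  rw [vtxWeight, ← (hsum v).sum_add_tsum_compl (s := S), tsum_subtype]
  ring

theorem isCore_empty (i : ℝ) : IsCore i w ∅ :=
  fun A hA => absurd hA (Finset.not_ssubset_empty A)

variable [DecidableEq V]

theorem internalWeight_union_add_inter (hnn : ∀ u v, 0 ≤ w u v) (S T : Finset V) :
    internalWeight w S + internalWeight w T ≤
      internalWeight w (S ∪ T) + internalWeight w (S ∩ T) := by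
  have hsub : S ×ˢ S ∪ T ×ˢ T ⊆ (S ∪ T) ×ˢ (S ∪ T) :=
    Finset.union_subset (Finset.product_subset_product Finset.subset_union_left
      Finset.subset_union_left) (Finset.product_subset_product Finset.subset_union_right
      Finset.subset_union_right)
  have hle := Finset.sum_le_sum_of_subset_of_nonneg hsub (f := fun p => w p.1 p.2)
    fun p _ _ => hnn p.1 p.2
  have hmod := Finset.sum_union_inter (s₁ := S ×ˢ S) (s₂ := T ×ˢ T) (f := fun p => w p.1 p.2)
  rw [Finset.product_inter_product] at hmod
  simp only [internalWeight]
  linarith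

theorem isol_union_add_inter (hnn : ∀ u v, 0 ≤ w u v) (hsum : ∀ v, Summable (w v)) (i : ℝ)
    (S T : Finset V) : isol i w S + isol i w T ≤ isol i w (S ∪ T) + isol i w (S ∩ T) := by
  have hvol : vol w (S ∪ T) + vol w (S ∩ T) = vol w S + vol w T := Finset.sum_union_inter
  simp only [isol, bdry_eq_vol_sub_internalWeight hsum]
  linear_combination (1 - i) * hvol + internalWeight_union_add_inter hnn S T

theorem IsCore.union (hnn : ∀ u v, 0 ≤ w u v) (hsum : ∀ v, Summable (w v)) {i : ℝ}
    {S T : Finset V} (hS : IsCore i w S) (hT : IsCore i w T) : IsCore i w (S ∪ T) :=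
  forall_ssubset_union_lt (isol_union_add_inter hnn hsum i) hS hT

theorem isCore_biUnion {ι : Type*} (hnn : ∀ u v, 0 ≤ w u v) (hsum : ∀ v, Summable (w v))
    {i : ℝ} (s : Finset ι) {S : ι → Finset V} (hS : ∀ j ∈ s, IsCore i w (S j)) :
    IsCore i w (s.biUnion S) := by
  classical
  induction s using Finset.induction_on with
  | empty => exact isCore_empty i
  | insert j s _ ih =>
    rw [Finset.biUnion_insert]
    exact (hS j (Finset.mem_insert_self j s)).union hnn hsum
      (ih fun k hk => hS k (Finset.mem_insert_of_mem hk))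

end Isolation

theorem core_union_general [DecidableEq V] (w : V → V → ℝ)
    (hnn : ∀ u v, 0 ≤ w u v)
    (hsum : ∀ v, Summable (w v)) (i : ℝ)
    (n : ℕ) (S : Fin n → Finset V) (hS : ∀ j, IsCore i w (S j)) :
    IsCore i w (Finset.univ.biUnion S) :=
  isCore_biUnion hnn hsum Finset.univ fun j _ => hS j

theorem core_union [DecidableEq V] (w : V → V → ℝ)
    (hsymm : ∀ u v, w u v = w v u) (hnn : ∀ u v, 0 ≤ w u v)
    (hsum : ∀ v, Summable (w v)) (i : ℝ) (hi0 : 0 < i) (hi1 : i < 1)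
    (n : ℕ) (S : Fin n → Finset V) (hS : ∀ j, IsCore i w (S j)) :
    IsCore i w (Finset.univ.biUnion S) :=
  core_union_general w hnn hsum i n S hS
end

section
/- Let G be a graph with i-anchored expansion and let A_i be the union of all i-isolated cores. Then the induced subgraph on V ∖ A_i satisfies the strong isoperimetric inequality with constant i: for every finite set S ⊆ V ∖ A_i, the boundary volume of S measured within G ∖ A_i is at least i times the volume of S measured within G ∖ A_i. -/
open scoped BigOperators Classical
open Filter MeasureTheory

variable {V : Type*}

/-- Volume of a finite vertex set in the induced subgraph `G ∖ A`. -/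
noncomputable def volOut (w : V → V → ℝ) (A : Set V) (S : Finset V) : ℝ :=
  ∑ v ∈ S, ∑' u, Aᶜ.indicator (w v) u

/-- Boundary volume of a finite vertex set in the induced subgraph `G ∖ A`. -/
noncomputable def bdryOut (w : V → V → ℝ) (A : Set V) (S : Finset V) : ℝ :=
  ∑ v ∈ S, ∑' u, ((↑S : Set V) ∪ A)ᶜ.indicator (w v) u

/-! ### Auxiliary machinery -/

/-- Total weight of edges from vertices of `X` into the set `Y`. -/
noncomputable def ew (w : V → V → ℝ) (X : Finset V) (Y : Set V) : ℝ :=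
  ∑ v ∈ X, ∑' u, Y.indicator (w v) u

section aux

variable {w : V → V → ℝ} {i : ℝ}

lemma summable_ind (hsum : ∀ v, Summable (w v)) (v : V) (Y : Set V) :
    Summable (Y.indicator (w v)) := (hsum v).indicator Y

lemma ew_nonneg (hnn : ∀ u v, 0 ≤ w u v) (X : Finset V) (Y : Set V) : 0 ≤ ew w X Y :=
  Finset.sum_nonneg fun v _ =>
    tsum_nonneg fun u => Set.indicator_nonneg (fun a _ => hnn v a) u

lemma ew_mono_right (hnn : ∀ u v, 0 ≤ w u v) (hsum : ∀ v, Summable (w v))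
    {Y Z : Set V} (hYZ : Y ⊆ Z) (X : Finset V) : ew w X Y ≤ ew w X Z :=
  Finset.sum_le_sum fun v _ =>
    Summable.tsum_le_tsum
      (fun u => Set.indicator_le_indicator_of_subset hYZ (fun a => hnn v a) u)
      (summable_ind hsum v Y) (summable_ind hsum v Z)

lemma ew_mono_left (hnn : ∀ u v, 0 ≤ w u v) {X X' : Finset V} (hXX' : X ⊆ X')
    (Y : Set V) : ew w X Y ≤ ew w X' Y :=
  Finset.sum_le_sum_of_subset_of_nonneg hXX' fun v _ _ =>
    tsum_nonneg fun u => Set.indicator_nonneg (fun a _ => hnn v a) u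

lemma ew_union_right (hsum : ∀ v, Summable (w v)) {Y Z : Set V}
    (h : Disjoint Y Z) (X : Finset V) :
    ew w X (Y ∪ Z) = ew w X Y + ew w X Z := by
  unfold ew
  rw [← Finset.sum_add_distrib]
  refine Finset.sum_congr rfl fun v _ => ?_
  rw [← Summable.tsum_add (summable_ind hsum v Y) (summable_ind hsum v Z)]
  refine tsum_congr fun u => ?_
  rw [Set.indicator_union_of_disjoint h]

lemma ew_union_left {X X' : Finset V} (h : Disjoint X X') (Y : Set V) :
    ew w (X ∪ X') Y = ew w X Y + ew w X' Y :=
  Finset.sum_union h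

lemma ew_coe (X N : Finset V) : ew w X ↑N = ∑ v ∈ X, ∑ u ∈ N, w v u := by
  refine Finset.sum_congr rfl fun v _ => ?_
  rw [tsum_eq_sum (s := N) (f := (↑N : Set V).indicator (w v))
    (fun b hb => Set.indicator_of_notMem (by simpa using hb) _)]
  exact Finset.sum_congr rfl fun u hu => Set.indicator_of_mem (by simpa using hu) _

lemma ew_comm (hsymm : ∀ u v, w u v = w v u) (X N : Finset V) :
    ew w X ↑N = ew w N ↑X := by
  rw [ew_coe, ew_coe, Finset.sum_comm]
  exact Finset.sum_congr rfl fun u _ => Finset.sum_congr rfl fun v _ => hsymm v u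

lemma vol_eq_ew (S : Finset V) : vol w S = ew w S Set.univ := by
  unfold vol vtxWeight ew
  simp [Set.indicator_univ]

lemma bdry_eq_ew (S : Finset V) : bdry w S = ew w S (↑S : Set V)ᶜ := rfl

lemma isol_def' (S : Finset V) : isol i w S = i * vol w S - bdry w S := rfl

/-- The key additivity identity for `isol` on disjoint unions. -/
lemma isol_union (hsymm : ∀ u v, w u v = w v u) (hsum : ∀ v, Summable (w v))
    {S F : Finset V} (hd : Disjoint S F) :
    isol i w (S ∪ F) = isol i w S + isol i w F + 2 * ew w S ↑F := by
  have hvol : vol w (S ∪ F) = vol w S + vol w F := Finset.sum_union hd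
  have hSF : ((↑(S ∪ F) : Set V))ᶜ = ((↑S : Set V) ∪ ↑F)ᶜ := by
    rw [Finset.coe_union]
  have hdis : ∀ v ∈ F, v ∉ S := fun v hv hvS => (Finset.disjoint_left.mp hd) hvS hv
  have hScompl : ((↑S : Set V))ᶜ = ((↑S : Set V) ∪ ↑F)ᶜ ∪ ↑F := by
    ext u
    simp only [Set.mem_compl_iff, Set.mem_union, Finset.mem_coe, not_or]
    constructor
    · intro h
      by_cases hu : u ∈ F
      · exact Or.inr hu
      · exact Or.inl ⟨h, hu⟩
    · rintro (⟨h, _⟩ | h)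
      · exact h
      · exact fun hSu => hdis u h hSu
  have hFcompl : ((↑F : Set V))ᶜ = ((↑S : Set V) ∪ ↑F)ᶜ ∪ ↑S := by
    ext u
    simp only [Set.mem_compl_iff, Set.mem_union, Finset.mem_coe, not_or]
    constructor
    · intro h
      by_cases hu : u ∈ S
      · exact Or.inr hu
      · exact Or.inl ⟨hu, h⟩
    · rintro (⟨_, h⟩ | h)
      · exact h
      · exact fun hFu => hdis u hFu h
  have hd1 : Disjoint (((↑S : Set V) ∪ ↑F)ᶜ) (↑F : Set V) := by
    rw [Set.disjoint_compl_left_iff_subset]; exact Set.subset_union_right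
  have hd2 : Disjoint (((↑S : Set V) ∪ ↑F)ᶜ) (↑S : Set V) := by
    rw [Set.disjoint_compl_left_iff_subset]; exact Set.subset_union_left
  have hbS : bdry w S = ew w S (((↑S : Set V) ∪ ↑F)ᶜ) + ew w S ↑F := by
    rw [bdry_eq_ew, hScompl, ew_union_right hsum hd1]
  have hbF : bdry w F = ew w F (((↑S : Set V) ∪ ↑F)ᶜ) + ew w F ↑S := by
    rw [bdry_eq_ew, hFcompl, ew_union_right hsum hd2]
  have hbU : bdry w (S ∪ F)
      = ew w S (((↑S : Set V) ∪ ↑F)ᶜ) + ew w F (((↑S : Set V) ∪ ↑F)ᶜ) := by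
    rw [bdry_eq_ew, hSF, ← ew_union_left hd]
  have hcomm : ew w F ↑S = ew w S ↑F := (ew_comm hsymm F S)
  unfold isol
  rw [hvol, hbU]
  rw [hbS, hbF, hcomm] ; ring

lemma isol_empty : isol i w (∅ : Finset V) = 0 := by
  simp [isol, vol, bdry]

/-- Absorbing a core into any set does not decrease isolation. -/
lemma core_absorb (hsymm : ∀ u v, w u v = w v u) (hnn : ∀ u v, 0 ≤ w u v)
    (hsum : ∀ v, Summable (w v)) {C : Finset V} (hC : IsCore i w C) (B : Finset V) :
    isol i w B ≤ isol i w (B ∪ C) := by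
  have hdisj1 : Disjoint B (C \ B) := Finset.disjoint_sdiff
  have hdisj2 : Disjoint (B ∩ C) (C \ B) :=
    hdisj1.mono_left Finset.inter_subset_left
  have h1 : isol i w (B ∪ C) = isol i w B + isol i w (C \ B) + 2 * ew w B ↑(C \ B) := by
    rw [← Finset.union_sdiff_self_eq_union]
    exact isol_union hsymm hsum hdisj1
  have hBC : (B ∩ C) ∪ (C \ B) = C := by
    ext x; simp [Finset.mem_union, Finset.mem_inter, Finset.mem_sdiff]; tauto
  have h2 : isol i w C
      = isol i w (B ∩ C) + isol i w (C \ B) + 2 * ew w (B ∩ C) ↑(C \ B) := by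
    have h2' := isol_union (i := i) hsymm hsum hdisj2
    rwa [hBC] at h2'
  have h3 : isol i w (B ∩ C) ≤ isol i w C := by
    rcases eq_or_ne (B ∩ C) C with h | h
    · rw [h]
    · exact (hC _ (Finset.ssubset_iff_subset_ne.mpr ⟨Finset.inter_subset_right, h⟩)).le
  have h4 : ew w (B ∩ C) ↑(C \ B) ≤ ew w B ↑(C \ B) :=
    ew_mono_left hnn Finset.inter_subset_left _
  linarith

/-- Absorbing a finite union of cores does not decrease isolation. -/
lemma core_absorb_biUnion (hsymm : ∀ u v, w u v = w v u) (hnn : ∀ u v, 0 ≤ w u v)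
    (hsum : ∀ v, Summable (w v)) (C : V → Finset V) :
    ∀ N : Finset V, (∀ u ∈ N, IsCore i w (C u)) → ∀ B : Finset V,
      isol i w B ≤ isol i w (B ∪ N.biUnion C) := by
  intro N
  induction N using Finset.induction_on with
  | empty => intro _ B; simp
  | @insert a s ha ih =>
    intro hC B
    rw [Finset.biUnion_insert, Finset.union_comm (C a), ← Finset.union_assoc]
    exact le_trans (ih (fun u hu => hC u (Finset.mem_insert_of_mem hu)) B)
      (core_absorb hsymm hnn hsum (hC a (Finset.mem_insert_self a s)) _)

/-- Every finite set contains a core with at least its isolation. -/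
lemma exists_max_core (i : ℝ) (w : V → V → ℝ) (T : Finset V) :
    ∃ B : Finset V, B ⊆ T ∧ IsCore i w B ∧ isol i w T ≤ isol i w B := by
  classical
  obtain ⟨B, hBmem, hBmax⟩ :=
    T.powerset.exists_max_image (isol i w) ⟨T, Finset.mem_powerset_self T⟩
  obtain ⟨B₀, hB₀mem, hB₀min⟩ :=
    (T.powerset.filter fun B' => isol i w B ≤ isol i w B').exists_min_image
      Finset.card ⟨B, by simp [hBmem]⟩
  rw [Finset.mem_filter, Finset.mem_powerset] at hB₀mem
  refine ⟨B₀, hB₀mem.1, ?_, ?_⟩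
  · intro A hA
    have hAT : A ∈ T.powerset :=
      Finset.mem_powerset.mpr (hA.subset.trans hB₀mem.1)
    by_contra hcon
    push_neg at hcon
    have hAmax : isol i w B ≤ isol i w A := le_trans hB₀mem.2 hcon
    have hAfilter : A ∈ T.powerset.filter fun B' => isol i w B ≤ isol i w B' := by
      rw [Finset.mem_filter]; exact ⟨hAT, hAmax⟩
    have := hB₀min A hAfilter
    exact absurd this (not_le.mpr (Finset.card_lt_card hA))
  · exact le_trans (hBmax T (Finset.mem_powerset_self T)) hB₀mem.2

lemma exists_tail (f : V → ℝ) (hf : Summable f) {ε : ℝ} (hε : 0 < ε) :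
    ∃ N : Finset V, (∑' u, f u) - ε ≤ ∑ u ∈ N, f u := by
  have h := hf.hasSum
  obtain ⟨N, hN⟩ := (h.eventually (Metric.ball_mem_nhds _ hε)).exists
  refine ⟨N, ?_⟩
  have := abs_lt.mp (by simpa [Real.dist_eq] using hN)
  linarith [this.1]

end aux

theorem ocean_cheeger (w : V → V → ℝ)
    (hsymm : ∀ u v, w u v = w v u) (hnn : ∀ u v, 0 ≤ w u v)
    (hsum : ∀ v, Summable (w v)) (i : ℝ) (hi0 : 0 < i) (hi1 : i < 1)
    (hanch : Anchored i w) :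
    ∀ S : Finset V, (↑S : Set V) ⊆ (coreUnion i w)ᶜ →
      i * volOut w (coreUnion i w) S ≤ bdryOut w (coreUnion i w) S := by
  intro S hS
  classical
  set A : Set V := coreUnion i w with hA
  -- basic decompositions
  have hvolOut : volOut w A S = ew w S Aᶜ := rfl
  have hbdryOut : bdryOut w A S = ew w S ((↑S : Set V) ∪ A)ᶜ := rfl
  have hSA : ∀ v ∈ S, v ∉ A := fun v hv => hS (by exact_mod_cast hv)
  have hvol : vol w S = ew w S Aᶜ + ew w S A := by
    rw [vol_eq_ew, ← Set.compl_union_self A, ew_union_right hsum disjoint_compl_left]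
  have hScompl : ((↑S : Set V))ᶜ = ((↑S : Set V) ∪ A)ᶜ ∪ A := by
    ext u
    simp only [Set.mem_compl_iff, Set.mem_union, Finset.mem_coe, not_or]
    constructor
    · intro h
      by_cases hu : u ∈ A
      · exact Or.inr hu
      · exact Or.inl ⟨h, hu⟩
    · rintro (⟨h, _⟩ | h)
      · exact h
      · exact fun hSu => hSA u hSu h
  have hbdry : bdry w S = ew w S ((↑S : Set V) ∪ A)ᶜ + ew w S A := by
    rw [bdry_eq_ew, hScompl, ew_union_right hsum]
    rw [Set.disjoint_compl_left_iff_subset]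
    exact Set.subset_union_right
  -- rewrite `ew w S A` as a single tsum
  set g : V → ℝ := fun u => ∑ v ∈ S, w v u with hg
  have hgsum : Summable g := summable_sum fun v _ => hsum v
  set f : V → ℝ := A.indicator g with hf
  have hfsum : Summable f := hgsum.indicator A
  have hewA : ew w S A = ∑' u, f u := by
    rw [ew, ← Summable.tsum_finsetSum (fun v _ => summable_ind hsum v A)]
    refine tsum_congr fun u => ?_
    by_cases hu : u ∈ A
    · simp [hf, hg, Set.indicator_of_mem hu]
    · simp [hf, Set.indicator_of_notMem hu]
  -- the key estimate, for every ε > 0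
  have main : ∀ ε : ℝ, 0 < ε →
      i * volOut w A S ≤ bdryOut w A S + 2 * ε := by
    intro ε hε
    obtain ⟨N, hN⟩ := exists_tail f hfsum hε
    set N' : Finset V := N.filter (· ∈ A) with hN'
    have hsumN : ∑ u ∈ N, f u = ∑ u ∈ N', g u := by
      rw [hN', Finset.sum_filter]
      refine Finset.sum_congr rfl fun u _ => ?_
      by_cases hu : u ∈ A
      · simp [hf, Set.indicator_of_mem hu, hu]
      · simp [hf, Set.indicator_of_notMem hu, hu]
    have hewN' : ew w S ↑N' = ∑ u ∈ N', g u := by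
      rw [ew_coe, Finset.sum_comm]
    have hN'A : ∀ u ∈ N', u ∈ A := fun u hu => (Finset.mem_filter.mp hu).2
    -- choose a core through each element of N'
    have hAex : ∀ u, u ∈ A → ∃ T : Finset V, IsCore i w T ∧ u ∈ T := fun u h => h
    set C : V → Finset V := fun u =>
      if h : u ∈ A then (hAex u h).choose else ∅ with hCdef
    have hCspec : ∀ u ∈ N', IsCore i w (C u) ∧ u ∈ C u := by
      intro u hu
      have h' : u ∈ A := hN'A u hu
      simp only [hCdef, dif_pos h']
      exact (hAex u h').choose_spec
    set F : Finset V := N'.biUnion C with hF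
    have hN'F : N' ⊆ F := by
      intro u hu
      exact Finset.mem_biUnion.mpr ⟨u, hu, (hCspec u hu).2⟩
    have hFA : ∀ v ∈ F, v ∈ A := by
      intro v hv
      obtain ⟨u, hu, hvC⟩ := Finset.mem_biUnion.mp hv
      exact ⟨C u, (hCspec u hu).1, hvC⟩
    have hdisj : Disjoint S F := by
      rw [Finset.disjoint_left]
      intro v hvS hvF
      exact hSA v hvS (hFA v hvF)
    -- the maximizing core inside S ∪ F
    obtain ⟨B₀, hB₀T, hB₀core, hB₀max⟩ := exists_max_core i w (S ∪ F)
    have hB₀F : B₀ ⊆ F := by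
      intro v hv
      have hvA : v ∈ A := ⟨B₀, hB₀core, hv⟩
      rcases Finset.mem_union.mp (hB₀T hv) with h | h
      · exact absurd hvA (hSA v h)
      · exact h
    have habs : isol i w B₀ ≤ isol i w F := by
      have h1 : isol i w B₀ ≤ isol i w (B₀ ∪ F) :=
        core_absorb_biUnion hsymm hnn hsum C N' (fun u hu => (hCspec u hu).1) B₀
      rwa [Finset.union_eq_right.mpr hB₀F] at h1
    have hunion : isol i w (S ∪ F) = isol i w S + isol i w F + 2 * ew w S ↑F :=
      isol_union hsymm hsum hdisj
    have hkey : isol i w S + 2 * ew w S ↑F ≤ 0 := by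
      have := le_trans hB₀max habs
      linarith [hunion, this]
    -- numerical wrap-up
    have hEF : ew w S A - ε ≤ ew w S ↑F := by
      have h1 : ew w S ↑N' ≤ ew w S ↑F :=
        ew_mono_right hnn hsum (by exact_mod_cast hN'F) S
      have h2 : ew w S A - ε ≤ ew w S ↑N' := by
        rw [hewA, hewN']; rw [hsumN] at hN; exact hN
      linarith
    have he0 : 0 ≤ ew w S A := ew_nonneg hnn S A
    have hie : 0 ≤ i * ew w S A := mul_nonneg hi0.le he0
    have hisolS : isol i w S = i * (ew w S Aᶜ + ew w S A)
        - (ew w S ((↑S : Set V) ∪ A)ᶜ + ew w S A) := by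
      rw [isol_def', hvol, hbdry]
    rw [hvolOut, hbdryOut]
    nlinarith [hkey, hEF, he0, hie, hisolS]
  by_contra hcon
  push_neg at hcon
  have hδ : 0 < i * volOut w A S - bdryOut w A S := by linarith
  have := main ((i * volOut w A S - bdryOut w A S) / 4) (by linarith)
  linarith
end

section
/- Let G be a connected graph with i-anchored expansion and edge weights bounded below by 1. If S is a union of i-islands each of volume at most 1/i' for some i' > 0, then S is disjoint from A_{i'}, i.e., S ⊆ V ∖ A_{i'}. -/
open scoped BigOperators Classical
open Filter MeasureTheory

variable {V : Type*}

/-!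
Suppose `v ∈ S ∩ A_{i'}` and let `C` be the island of `A_i` through `v`. With `k = min i i'`,
the vertex `v` lies in a `k`-core, and its connected component inside that core is again a
`k`-core `D`, since `Δ_k` is additive over parts with no edges between them. A nonempty
`k`-core has `Δ_k > 0` and, `G` being infinite and connected, boundary at least `1`, so
`vol D > 1/k ≥ 1/i'`. But `D` is also an `i`-core, hence a connected subset of `A_i` meeting
`C`, so `D ⊆ C` and `vol C > 1/i'`.
-/

open Finset

namespace SimpleGraph

theorem exists_connected_induce_closed_subset (G : SimpleGraph V) {T : Finset V}
    {v : V} (hv : v ∈ T) :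
    ∃ D ⊆ T, v ∈ D ∧ (G.induce (D : Set V)).Connected ∧
      ∀ a ∈ D, ∀ b ∈ T, G.Adj a b → b ∈ D := by
  have hsingleton : (G.induce (({v} : Finset V) : Set V)).Connected := by
    rw [coe_singleton, induce_singleton_eq_top]
    exact connected_top
  obtain ⟨D, -, hDmax⟩ :=
    (T.powerset.filter fun D : Finset V => v ∈ D ∧ (G.induce (D : Set V)).Connected)
      |>.exists_le_maximal (a := {v})
        (mem_filter.2 ⟨by simpa using hv, mem_singleton_self v, hsingleton⟩)
  simp only [mem_filter, mem_powerset] at hDmax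
  obtain ⟨⟨hDT, hvD, hDconn⟩, hmax⟩ := hDmax
  refine ⟨D, hDT, hvD, hDconn, fun a ha b hb hab => ?_⟩
  have hconn : (G.induce (insert b D : Finset V)).Connected := by
    rw [coe_insert, ← Set.union_singleton]
    exact connected_induce_union hDconn.preconnected (by simp) (mem_coe.2 ha) rfl hab
  exact hmax ⟨insert_subset hb hDT, mem_insert_of_mem hvD, hconn⟩ (subset_insert b D)
    (mem_insert_self b D)

end SimpleGraph

section Isolation

variable {w : V → V → ℝ}

lemma vtxWeight_nonneg (hnn : ∀ u v, 0 ≤ w u v) (v : V) : 0 ≤ vtxWeight w v :=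
  tsum_nonneg (hnn v)

lemma vol_mono (hnn : ∀ u v, 0 ≤ w u v) {A B : Finset V} (h : A ⊆ B) : vol w A ≤ vol w B :=
  sum_le_sum_of_subset_of_nonneg h fun v _ _ => vtxWeight_nonneg hnn v

lemma indicator_compl_union_eq {A B : Finset V} {x : V} (hB : ∀ b ∈ B, w x b = 0) :
    ((↑(A ∪ B) : Set V)ᶜ).indicator (w x) = ((↑A : Set V)ᶜ).indicator (w x) := by
  ext u
  by_cases hu : u ∈ B <;> simp [Set.indicator_apply, hu, hB]

lemma bdry_union {A B : Finset V} (hd : Disjoint A B)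
    (hAB : ∀ a ∈ A, ∀ b ∈ B, w a b = 0 ∧ w b a = 0) :
    bdry w (A ∪ B) = bdry w A + bdry w B := by
  unfold bdry
  rw [sum_union hd]
  congr 1
  · exact sum_congr rfl fun a ha => by
      rw [indicator_compl_union_eq fun b hb => (hAB a ha b hb).1]
  · exact sum_congr rfl fun b hb => by
      rw [union_comm, indicator_compl_union_eq fun a ha => (hAB a ha b hb).2]

lemma isol_union_s7 (k : ℝ) {A B : Finset V} (hd : Disjoint A B)
    (hAB : ∀ a ∈ A, ∀ b ∈ B, w a b = 0 ∧ w b a = 0) :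
    isol k w (A ∪ B) = isol k w A + isol k w B := by
  simp only [isol, vol, bdry_union hd hAB, sum_union hd]
  ring

lemma one_le_bdry [Infinite V] (hsymm : ∀ u v, w u v = w v u) (hnn : ∀ u v, 0 ≤ w u v)
    (hsum : ∀ v, Summable (w v)) (hw1 : ∀ u v, w u v ≠ 0 → 1 ≤ w u v)
    (hconn : (gra w).Connected) {T : Finset V} (hT : T.Nonempty) : 1 ≤ bdry w T := by
  obtain ⟨x, hx⟩ := hT
  obtain ⟨y, hy⟩ := Infinite.exists_notMem_finset T
  obtain ⟨p⟩ := hconn.preconnected x y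
  obtain ⟨d, -, hd₁, hd₂⟩ := p.exists_boundary_dart T hx hy
  have hpos : 0 < w d.fst d.snd := by
    simpa [hsymm d.snd] using ((SimpleGraph.fromRel_adj _ _ _).1 d.adj).2
  have hind_nonneg : ∀ v u, 0 ≤ ((↑T : Set V)ᶜ).indicator (w v) u :=
    fun v => Set.indicator_nonneg fun u _ => hnn v u
  calc 1 ≤ w d.fst d.snd := hw1 _ _ hpos.ne'
    _ = ((↑T : Set V)ᶜ).indicator (w d.fst) d.snd := (Set.indicator_of_mem hd₂ _).symm
    _ ≤ ∑' u, ((↑T : Set V)ᶜ).indicator (w d.fst) u :=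
      ((hsum _).indicator _).le_tsum _ fun u _ => hind_nonneg _ u
    _ ≤ bdry w T :=
      single_le_sum (f := fun v => ∑' u, ((↑T : Set V)ᶜ).indicator (w v) u)
        (fun v _ => tsum_nonneg (hind_nonneg v)) hd₁

end Isolation

namespace IsCore

variable {w : V → V → ℝ} {k : ℝ} {T : Finset V}

lemma isol_pos (hT : IsCore k w T) (hne : T.Nonempty) : 0 < isol k w T := by
  simpa [isol, vol, bdry] using hT ∅ hne.empty_ssubset

lemma mono (hnn : ∀ u v, 0 ≤ w u v) {i : ℝ} (hki : k ≤ i) (hT : IsCore k w T) :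
    IsCore i w T := by
  intro A hA
  have hlt := hT A hA
  have hvol : (i - k) * vol w A ≤ (i - k) * vol w T :=
    mul_le_mul_of_nonneg_left (vol_mono hnn hA.subset) (sub_nonneg.2 hki)
  unfold isol at hlt ⊢
  linarith

lemma coe_subset_coreUnion (hT : IsCore k w T) : (T : Set V) ⊆ coreUnion k w :=
  fun _ hv => ⟨T, hT, hv⟩

lemma of_union {D E : Finset V} (hT : IsCore k w (D ∪ E)) (hd : Disjoint D E)
    (hDE : ∀ a ∈ D, ∀ b ∈ E, w a b = 0 ∧ w b a = 0) : IsCore k w D := by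
  intro A hA
  have hAE : A ∪ E ⊂ D ∪ E := by
    obtain ⟨d, hdD, hdA⟩ := exists_of_ssubset hA
    refine (ssubset_iff_of_subset (union_subset_union hA.subset subset_rfl)).2
      ⟨d, mem_union_left E hdD, ?_⟩
    simpa [hdA] using disjoint_left.1 hd hdD
  have hlt := hT _ hAE
  rwa [isol_union_s7 k (hd.mono_left hA.subset) fun a ha => hDE a (hA.subset ha),
    isol_union_s7 k hd hDE, add_lt_add_iff_right] at hlt

lemma exists_connected_subcore (hnn : ∀ u v, 0 ≤ w u v) (hT : IsCore k w T) {v : V}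
    (hv : v ∈ T) : ∃ D : Finset V, v ∈ D ∧ IsCore k w D ∧ ConnSet w D := by
  obtain ⟨D, hDT, hvD, hDconn, hclosed⟩ := (gra w).exists_connected_induce_closed_subset hv
  have hnoEdge : ∀ a ∈ D, ∀ b ∈ T \ D, w a b = 0 ∧ w b a = 0 := by
    intro a ha b hb
    rw [Finset.mem_sdiff] at hb
    have hab : a ≠ b := by rintro rfl; exact hb.2 ha
    obtain ⟨hab₀, hba₀⟩ := not_or.1 fun h : 0 < w a b ∨ 0 < w b a =>
      hb.2 (hclosed a ha b hb.1 ((SimpleGraph.fromRel_adj _ _ _).2 ⟨hab, h⟩))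
    exact ⟨le_antisymm (not_lt.1 hab₀) (hnn a b), le_antisymm (not_lt.1 hba₀) (hnn b a)⟩
  rw [← union_sdiff_of_subset hDT] at hT
  exact ⟨D, hvD, hT.of_union disjoint_sdiff hnoEdge, hDconn⟩

lemma one_div_lt_vol [Infinite V] (hsymm : ∀ u v, w u v = w v u) (hnn : ∀ u v, 0 ≤ w u v)
    (hsum : ∀ v, Summable (w v)) (hw1 : ∀ u v, w u v ≠ 0 → 1 ≤ w u v)
    (hconn : (gra w).Connected) (hk : 0 < k) (hT : IsCore k w T) (hne : T.Nonempty) :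
    1 / k < vol w T := by
  have hisol := hT.isol_pos hne
  have hbdry := one_le_bdry hsymm hnn hsum hw1 hconn hne
  rw [div_lt_iff₀ hk]
  unfold isol at hisol
  linarith

end IsCore

lemma mem_coreUnion_min {w : V → V → ℝ} {i i' : ℝ} {v : V}
    (hi : v ∈ coreUnion i w) (hi' : v ∈ coreUnion i' w) : v ∈ coreUnion (min i i') w := by
  rcases min_choice i i' with h | h <;> rwa [h]

lemma IsIsland.subset_of_connSet {w : V → V → ℝ} {i : ℝ} {C D : Set V}
    (hC : IsIsland i w C) (hD : D ⊆ coreUnion i w) (hDconn : ConnSet w D)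
    (hCD : (C ∩ D).Nonempty) : D ⊆ C := by
  obtain ⟨-, hCsub, hCconn, hmax⟩ := hC
  exact Set.union_eq_left.1 <| hmax (C ∪ D) Set.subset_union_left (Set.union_subset hCsub hD)
    (SimpleGraph.induce_union_connected hCconn.preconnected hDconn.preconnected hCD)

theorem sink_islands_general (w : V → V → ℝ) [Infinite V]
    (hsymm : ∀ u v, w u v = w v u) (hnn : ∀ u v, 0 ≤ w u v)
    (hsum : ∀ v, Summable (w v))
    (hw1 : ∀ u v, w u v ≠ 0 → 1 ≤ w u v)
    (hconn : (gra w).Connected)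
    (i : ℝ) (hi0 : 0 < i)
    (i' : ℝ) (hi'0 : 0 < i')
    (S : Set V)
    (hS : ∀ v ∈ S, ∃ C : Finset V,
      IsIsland i w (↑C : Set V) ∧ v ∈ C ∧ (↑C : Set V) ⊆ S ∧ vol w C ≤ 1 / i') :
    Disjoint S (coreUnion i' w) := by
  refine Set.disjoint_left.2 fun v hvS hvA' => ?_
  obtain ⟨C, hC, hvC, -, hvolC⟩ := hS v hvS
  have hk : 0 < min i i' := lt_min hi0 hi'0
  obtain ⟨T, hT, hvT⟩ := mem_coreUnion_min (hC.2.1 hvC) hvA'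
  obtain ⟨D, hvD, hD, hDconn⟩ := hT.exists_connected_subcore hnn hvT
  have hDC : (D : Set V) ⊆ C := hC.subset_of_connSet
    (hD.mono hnn (min_le_left i i')).coe_subset_coreUnion hDconn ⟨v, hvC, hvD⟩
  have hvolC_gt : 1 / i' < vol w C := calc
    1 / i' ≤ 1 / min i i' := one_div_le_one_div_of_le hk (min_le_right i i')
    _ < vol w D := hD.one_div_lt_vol hsymm hnn hsum hw1 hconn hk ⟨v, hvD⟩
    _ ≤ vol w C := vol_mono hnn (coe_subset.1 hDC)
  linarith

theorem sink_islands (w : V → V → ℝ) [Infinite V]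
    (hsymm : ∀ u v, w u v = w v u) (hnn : ∀ u v, 0 ≤ w u v)
    (hsum : ∀ v, Summable (w v))
    (hw1 : ∀ u v, w u v ≠ 0 → 1 ≤ w u v)
    (hconn : (gra w).Connected)
    (i : ℝ) (hi0 : 0 < i) (hi1 : i < 1) (hanch : Anchored i w)
    (i' : ℝ) (hi'0 : 0 < i')
    (S : Set V)
    (hS : ∀ v ∈ S, ∃ C : Finset V,
      IsIsland i w (↑C : Set V) ∧ v ∈ C ∧ (↑C : Set V) ⊆ S ∧ vol w C ≤ 1 / i') :
    Disjoint S (coreUnion i' w) :=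
  sink_islands_general w hsymm hnn hsum hw1 hconn i hi0 i' hi'0 S hS
end

section
/- Let G be a weighted graph whose Markov kernel P satisfies ‖P‖ < 1, and let f : V → [0, ∞) be a vertex function such that g := limsup_n |f⁻¹([0,n])|^{1/n} < ∞ with g > 1. Then the random walk (X_n) started from any vertex satisfies liminf_n f(X_n)/n ≥ −2 log‖P‖ / log g almost surely. -/
open scoped BigOperators Classical
open Filter MeasureTheory

variable {V : Type*}

/-!
If `X` is the walk started at `x₀`, a union bound over paths gives
`μ(X_n ∈ A) ≤ (Pⁿ 1_A)(x₀)`, and comparing the value at `x₀` with the `L²(w)` norm gives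
`(Pⁿ 1_A)(x₀) ≤ ρⁿ ‖1_A‖ / √w(x₀) = ρⁿ √(|A| / w(x₀))`.
For `ε < -2 log ρ / log g` pick `g' > g` with `ρ g'^{ε/2} < 1`. The sublevel sets
`A_n = {f ≤ ε n}` have `|A_n| = O(g'^{ε n})`, so `μ(f(X_n) ≤ ε n)` decays geometrically and by
Borel–Cantelli `f(X_n) > ε n` eventually, almost surely. Letting `ε` increase to
`-2 log ρ / log g` along a sequence gives the bound on the `liminf`.
-/

open scoped ENNReal Topology

-- `P` and the squared `L²(w)` norm `normSq` act on `ℝ≥0∞`-valued functions, so that neither needs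
-- summability side conditions.
noncomputable def kernelOp (m : V → V → ℝ≥0∞) (h : V → ℝ≥0∞) (x : V) : ℝ≥0∞ :=
  ∑' z, m x z * h z

noncomputable def pathWeight (m : V → V → ℝ≥0∞) (x : V) {n : ℕ} (γ : Fin (n + 1) → V) :
    ℝ≥0∞ :=
  (if γ 0 = x then 1 else 0) * ∏ k : Fin n, m (γ k.castSucc) (γ k.succ)

lemma pathWeight_of_ne (m : V → V → ℝ≥0∞) {x : V} {n : ℕ} {γ : Fin (n + 1) → V}
    (hγ : γ 0 ≠ x) : pathWeight m x γ = 0 := by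
  simp [pathWeight, hγ]

lemma pathWeight_cons (m : V → V → ℝ≥0∞) (x z : V) {n : ℕ} (δ : Fin (n + 1) → V) :
    pathWeight m x (Fin.cons z δ : Fin (n + 2) → V) =
      if z = x then m x (δ 0) * pathWeight m (δ 0) δ else 0 := by
  split_ifs with hz
  · subst hz
    simp [pathWeight, Fin.prod_univ_succ]
  · simp [pathWeight, hz]

theorem tsum_pathWeight_mul (m : V → V → ℝ≥0∞) (F : V → ℝ≥0∞) (n : ℕ) (x : V) :
    ∑' γ : Fin (n + 1) → V, pathWeight m x γ * F (γ (Fin.last n)) = (kernelOp m)^[n] F x := by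
  induction n generalizing x with
  | zero =>
    rw [tsum_eq_single (fun _ => x) fun γ hγ => ?_]
    · simp [pathWeight]
    · rw [pathWeight_of_ne m fun h => hγ (funext fun i => by rwa [Fin.fin_one_eq_zero i]), zero_mul]
  | succ n ih =>
    have hstep : ∀ δ : Fin (n + 1) → V,
        ∑' y, m x y * (pathWeight m y δ * F (δ (Fin.last n))) =
          m x (δ 0) * pathWeight m (δ 0) δ * F (δ (Fin.last n)) := fun δ => by
      rw [tsum_eq_single (δ 0) fun y hy => by rw [pathWeight_of_ne m (Ne.symm hy)]; simp, mul_assoc]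
    rw [← (Fin.consEquiv fun _ => V).tsum_eq, ENNReal.tsum_prod',
      tsum_eq_single x fun z hz => by simp [Fin.consEquiv, pathWeight_cons, hz],
      Function.iterate_succ_apply', kernelOp]
    simp_rw [← ih, ← ENNReal.tsum_mul_left]
    rw [ENNReal.tsum_comm]
    simp [Fin.consEquiv, pathWeight_cons, ← Fin.succ_last, hstep]

lemma measure_cylinder_le_pathWeight [MeasurableSpace V]
    {μ : Measure (ℕ → V)} {m : V → V → ℝ≥0∞} {x₀ : V}
    (hμ : ∀ (n : ℕ) (γ : ℕ → V), μ {ω | ∀ k ≤ n, ω k = γ k} ≤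
      (if γ 0 = x₀ then 1 else 0) * ∏ k ∈ Finset.range n, m (γ k) (γ (k + 1)))
    {n : ℕ} (γ : Fin (n + 1) → V) :
    μ {ω | ∀ k : Fin (n + 1), ω k = γ k} ≤ pathWeight m x₀ γ := by
  let γ' : ℕ → V := fun k => γ ⟨min k n, Nat.lt_succ_of_le (min_le_right k n)⟩
  have hset : {ω : ℕ → V | ∀ k : Fin (n + 1), ω k = γ k} = {ω | ∀ k ≤ n, ω k = γ' k} := by
    ext ω
    refine ⟨fun h k hk => by simpa [γ', hk] using h ⟨k, Nat.lt_succ_of_le hk⟩, fun h k => ?_⟩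
    simpa [γ', Nat.le_of_lt_succ k.2] using h k (Nat.le_of_lt_succ k.2)
  have hprod : ∏ k ∈ Finset.range n, m (γ' k) (γ' (k + 1)) =
      ∏ k : Fin n, m (γ k.castSucc) (γ k.succ) := by
    rw [← Fin.prod_univ_eq_prod_range]
    congr! with k <;> simp [k.2.le, Nat.succ_le_of_lt k.2]
  simpa [hset, pathWeight, hprod, γ'] using hμ n γ'

theorem measure_eval_mem_le_kernelOp_iterate [MeasurableSpace V] [Countable V]
    {μ : Measure (ℕ → V)} {m : V → V → ℝ≥0∞} {x₀ : V}
    (hμ : ∀ (n : ℕ) (γ : ℕ → V), μ {ω | ∀ k ≤ n, ω k = γ k} ≤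
      (if γ 0 = x₀ then 1 else 0) * ∏ k ∈ Finset.range n, m (γ k) (γ (k + 1)))
    (A : Set V) (n : ℕ) :
    μ {ω | ω n ∈ A} ≤ (kernelOp m)^[n] (A.indicator 1) x₀ := by
  let cyl : (Fin (n + 1) → V) → Set (ℕ → V) := fun γ => {ω | ∀ k : Fin (n + 1), ω k = γ k}
  have hcover : {ω : ℕ → V | ω n ∈ A} ⊆ ⋃ γ, cyl γ ∩ {ω | ω n ∈ A} := fun ω hω =>
    Set.mem_iUnion.2 ⟨fun k => ω k, fun _ => rfl, hω⟩
  calc μ {ω | ω n ∈ A} ≤ ∑' γ, μ (cyl γ ∩ {ω | ω n ∈ A}) :=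
        (measure_mono hcover).trans (measure_iUnion_le _)
    _ ≤ ∑' γ, pathWeight m x₀ γ * A.indicator 1 (γ (Fin.last n)) := by
        refine ENNReal.tsum_le_tsum fun γ => ?_
        by_cases hγ : γ (Fin.last n) ∈ A
        · simpa [hγ] using (measure_mono Set.inter_subset_left).trans
            (measure_cylinder_le_pathWeight hμ γ)
        · have hempty : cyl γ ∩ {ω | ω n ∈ A} = ∅ :=
            Set.eq_empty_of_forall_notMem fun ω ⟨hω, hωA⟩ =>
              hγ (hω (Fin.last n) ▸ hωA)
          simp [hempty]
    _ = (kernelOp m)^[n] (A.indicator 1) x₀ := tsum_pathWeight_mul m _ n x₀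

section WeightedGraph

variable {w : V → V → ℝ}

noncomputable def ennMarkov (w : V → V → ℝ) (u v : V) : ℝ≥0∞ := ENNReal.ofReal (markov w u v)

noncomputable def normSq (w : V → V → ℝ) (h : V → ℝ≥0∞) : ℝ≥0∞ :=
  ∑' v, h v ^ 2 * ENNReal.ofReal (vtxWeight w v)

def MarkovNormLE (w : V → V → ℝ) (ρ : ℝ) : Prop :=
  ∀ f : V → ℝ, f.support.Finite →
    ∑' v, (∑' u, markov w v u * f u) ^ 2 * vtxWeight w v ≤ ρ ^ 2 * ∑' v, f v ^ 2 * vtxWeight w v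

lemma markov_nonneg (hnn : ∀ u v, 0 ≤ w u v) (hpos : ∀ v, 0 < vtxWeight w v) (u v : V) :
    0 ≤ markov w u v :=
  div_nonneg (hnn u v) (hpos u).le

lemma markov_le_one (hnn : ∀ u v, 0 ≤ w u v) (hsum : ∀ v, Summable (w v))
    (hpos : ∀ v, 0 < vtxWeight w v) (u v : V) : markov w u v ≤ 1 :=
  div_le_one_of_le₀ ((hsum u).le_tsum v fun z _ => hnn u z) (hpos u).le

lemma normSq_ofReal (hpos : ∀ v, 0 < vtxWeight w v) {ψ : V → ℝ} (hψ : 0 ≤ ψ)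
    (hs : Summable fun v => ψ v ^ 2 * vtxWeight w v) :
    normSq w (fun v => ENNReal.ofReal (ψ v)) =
      ENNReal.ofReal (∑' v, ψ v ^ 2 * vtxWeight w v) := by
  rw [ENNReal.ofReal_tsum_of_nonneg (fun v => mul_nonneg (sq_nonneg _) (hpos v).le) hs, normSq]
  refine tsum_congr fun v => ?_
  rw [ENNReal.ofReal_mul (sq_nonneg _), ENNReal.ofReal_pow (hψ v)]

lemma summable_markov_sq_mul_vtxWeight (hsymm : ∀ u v, w u v = w v u)
    (hnn : ∀ u v, 0 ≤ w u v) (hsum : ∀ v, Summable (w v)) (hpos : ∀ v, 0 < vtxWeight w v)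
    {φ : V → ℝ} (hφ : 0 ≤ φ) (hfin : φ.support.Finite) :
    Summable fun v => (∑' u, markov w v u * φ u) ^ 2 * vtxWeight w v := by
  set F := hfin.toFinset
  set M := ∑ u ∈ F, φ u
  have hPφ : ∀ v, ∑' u, markov w v u * φ u = ∑ u ∈ F, markov w v u * φ u := fun v =>
    tsum_eq_sum fun u hu => by simp [Function.notMem_support.1 (by simpa [F] using hu)]
  have hle : ∀ v, ∑' u, markov w v u * φ u ≤ M := fun v => by
    rw [hPφ]
    exact Finset.sum_le_sum fun u _ =>
      mul_le_of_le_one_left (hφ u) (markov_le_one hnn hsum hpos v u)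
  -- `(Pφ)(v)² w(v) ≤ M · (Pφ)(v) w(v) = M ∑_u w(u,v) φ(u)`, summable in `v` by symmetry
  refine Summable.of_nonneg_of_le (fun v => mul_nonneg (sq_nonneg _) (hpos v).le) (fun v => ?_)
    ((summable_sum (s := F) fun u _ => (hsum u).mul_left (φ u)).mul_left M)
  have hPφ_nonneg : 0 ≤ ∑' u, markov w v u * φ u :=
    tsum_nonneg fun u => mul_nonneg (markov_nonneg hnn hpos v u) (hφ u)
  calc (∑' u, markov w v u * φ u) ^ 2 * vtxWeight w v
      ≤ M * ((∑' u, markov w v u * φ u) * vtxWeight w v) := by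
        rw [sq, mul_assoc]
        exact mul_le_mul_of_nonneg_right (hle v) (mul_nonneg hPφ_nonneg (hpos v).le)
    _ = M * ∑ u ∈ F, φ u * w u v := by
        congr 1
        rw [hPφ, Finset.sum_mul]
        refine Finset.sum_congr rfl fun u _ => ?_
        rw [markov, hsymm]
        field_simp [(hpos v).ne']

lemma normSq_kernelOp_ofReal_le (hsymm : ∀ u v, w u v = w v u) (hnn : ∀ u v, 0 ≤ w u v)
    (hsum : ∀ v, Summable (w v)) (hpos : ∀ v, 0 < vtxWeight w v) {ρ : ℝ} (hP : MarkovNormLE w ρ)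
    {φ : V → ℝ} (hφ : 0 ≤ φ) (hfin : φ.support.Finite) :
    normSq w (kernelOp (ennMarkov w) fun v => ENNReal.ofReal (φ v)) ≤
      ENNReal.ofReal (ρ ^ 2) * normSq w fun v => ENNReal.ofReal (φ v) := by
  have hPφ : kernelOp (ennMarkov w) (fun v => ENNReal.ofReal (φ v)) =
      fun v => ENNReal.ofReal (∑' u, markov w v u * φ u) := funext fun v => by
    have hnonneg : ∀ u, 0 ≤ markov w v u * φ u := fun u =>
      mul_nonneg (markov_nonneg hnn hpos v u) (hφ u)
    rw [ENNReal.ofReal_tsum_of_nonneg hnonneg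
      (summable_of_hasFiniteSupport (hfin.subset (Function.support_mul_subset_right ..)))]
    exact tsum_congr fun u => (ENNReal.ofReal_mul (markov_nonneg hnn hpos v u)).symm
  have hPφ_nonneg : 0 ≤ fun v => ∑' u, markov w v u * φ u := fun v =>
    tsum_nonneg fun u => mul_nonneg (markov_nonneg hnn hpos v u) (hφ u)
  have hφ_summable : Summable fun v => φ v ^ 2 * vtxWeight w v :=
    summable_of_hasFiniteSupport (hfin.subset fun v hv => by simp_all)
  rw [hPφ, normSq_ofReal hpos hPφ_nonneg
      (summable_markov_sq_mul_vtxWeight hsymm hnn hsum hpos hφ hfin),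
    normSq_ofReal hpos hφ hφ_summable, ← ENNReal.ofReal_mul (sq_nonneg ρ)]
  exact ENNReal.ofReal_le_ofReal (hP φ hfin)

lemma kernelOp_indicator (m : V → V → ℝ≥0∞) (h : V → ℝ≥0∞) (F : Finset V) (x : V) :
    kernelOp m ((↑F : Set V).indicator h) x = ∑ z ∈ F, m x z * h z := by
  rw [sum_eq_tsum_indicator, kernelOp]
  congr with z
  by_cases hz : z ∈ F <;> simp [hz]

lemma normSq_mono {h h' : V → ℝ≥0∞} (hle : h ≤ h') : normSq w h ≤ normSq w h' :=
  ENNReal.tsum_le_tsum fun v => by gcongr; exact hle v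

theorem normSq_kernelOp_le (hsymm : ∀ u v, w u v = w v u) (hnn : ∀ u v, 0 ≤ w u v)
    (hsum : ∀ v, Summable (w v)) (hpos : ∀ v, 0 < vtxWeight w v) {ρ : ℝ} (hρ : 0 < ρ)
    (hP : MarkovNormLE w ρ) (h : V → ℝ≥0∞) :
    normSq w (kernelOp (ennMarkov w) h) ≤ ENNReal.ofReal (ρ ^ 2) * normSq w h := by
  by_cases htop : ∃ v, h v = ⊤
  · obtain ⟨v, hv⟩ := htop
    have : normSq w h = ⊤ := ENNReal.tsum_eq_top_of_eq_top ⟨v, by simp [hv, hpos v]⟩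
    simp [this, hρ.ne']
  push Not at htop
  have htrunc : ∀ F : Finset V, normSq w (kernelOp (ennMarkov w) ((↑F : Set V).indicator h)) ≤
      ENNReal.ofReal (ρ ^ 2) * normSq w h := fun F => by
    have hF : (↑F : Set V).indicator h =
        fun v => ENNReal.ofReal ((↑F : Set V).indicator (fun v => (h v).toReal) v) :=
      funext fun v => by by_cases hv : v ∈ F <;> simp [hv, htop v]
    calc _ ≤ ENNReal.ofReal (ρ ^ 2) * normSq w ((↑F : Set V).indicator h) := by
          rw [hF]
          exact normSq_kernelOp_ofReal_le hsymm hnn hsum hpos hP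
            (Set.indicator_nonneg fun _ _ => ENNReal.toReal_nonneg)
            (F.finite_toSet.subset (Set.support_indicator_subset))
      _ ≤ _ := by gcongr; exact normSq_mono (Set.indicator_le_self _ _)
  -- `normSq` is lower semicontinuous along the truncations `h · 1_F`
  refine ENNReal.summable.tsum_le_of_sum_le fun S => ?_
  have hlim : Tendsto (fun F : Finset V => ∑ v ∈ S,
      kernelOp (ennMarkov w) ((↑F : Set V).indicator h) v ^ 2 * ENNReal.ofReal (vtxWeight w v))
      atTop (𝓝 (∑ v ∈ S, kernelOp (ennMarkov w) h v ^ 2 * ENNReal.ofReal (vtxWeight w v))) := by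
    refine tendsto_finsetSum _ fun v _ =>
      ENNReal.Tendsto.mul_const (ENNReal.Tendsto.pow ?_) (Or.inr ENNReal.ofReal_ne_top)
    simp only [kernelOp_indicator]
    exact ENNReal.summable.hasSum
  exact le_of_tendsto' hlim fun F => (ENNReal.sum_le_tsum S).trans (htrunc F)

theorem normSq_kernelOp_iterate_le (hsymm : ∀ u v, w u v = w v u) (hnn : ∀ u v, 0 ≤ w u v)
    (hsum : ∀ v, Summable (w v)) (hpos : ∀ v, 0 < vtxWeight w v) {ρ : ℝ} (hρ : 0 < ρ)
    (hP : MarkovNormLE w ρ) (h : V → ℝ≥0∞) (n : ℕ) :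
    normSq w ((kernelOp (ennMarkov w))^[n] h) ≤ ENNReal.ofReal (ρ ^ 2) ^ n * normSq w h := by
  induction n with
  | zero => simp
  | succ n ih =>
    rw [Function.iterate_succ_apply', pow_succ', mul_assoc]
    exact (normSq_kernelOp_le hsymm hnn hsum hpos hρ hP _).trans (by gcongr)

noncomputable def setVol (W : V → ℝ) (A : Set V) : ℝ := ∑' v, A.indicator W v

lemma normSq_indicator_one (hpos : ∀ v, 0 < vtxWeight w v) {A : Set V}
    (hA : Summable (A.indicator (vtxWeight w))) :
    normSq w (A.indicator 1) = ENNReal.ofReal (setVol (vtxWeight w) A) := by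
  rw [setVol, ENNReal.ofReal_tsum_of_nonneg (Set.indicator_nonneg fun v _ => (hpos v).le) hA]
  refine tsum_congr fun v => ?_
  by_cases hv : v ∈ A <;> simp [hv]

def IsWalkLaw [MeasurableSpace V] (w : V → V → ℝ) (x₀ : V) (μ : Measure (ℕ → V)) : Prop :=
  ∀ (n : ℕ) (γ : ℕ → V), μ {ω | ∀ k ≤ n, ω k = γ k} =
    ENNReal.ofReal ((if γ 0 = x₀ then 1 else 0) * ∏ k ∈ Finset.range n, markov w (γ k) (γ (k + 1)))

theorem measure_walk_mem_le [MeasurableSpace V] [Countable V] (hsymm : ∀ u v, w u v = w v u)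
    (hnn : ∀ u v, 0 ≤ w u v) (hsum : ∀ v, Summable (w v)) (hpos : ∀ v, 0 < vtxWeight w v)
    {ρ : ℝ} (hρ : 0 < ρ) (hP : MarkovNormLE w ρ) {x₀ : V} {μ : Measure (ℕ → V)}
    (hμ : IsWalkLaw w x₀ μ)
    {A : Set V} (hA : Summable (A.indicator (vtxWeight w))) (n : ℕ) :
    μ {ω | ω n ∈ A} ≤
      ENNReal.ofReal (ρ ^ n * Real.sqrt (setVol (vtxWeight w) A / vtxWeight w x₀)) := by
  have hμ' : ∀ (n : ℕ) (γ : ℕ → V), μ {ω | ∀ k ≤ n, ω k = γ k} ≤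
      (if γ 0 = x₀ then 1 else 0) * ∏ k ∈ Finset.range n, ennMarkov w (γ k) (γ (k + 1)) :=
    fun n γ => by
      rw [hμ, ENNReal.ofReal_mul (by split_ifs <;> norm_num),
        ENNReal.ofReal_prod_of_nonneg fun k _ => markov_nonneg hnn hpos _ _]
      split_ifs <;> simp [ennMarkov]
  set H := (kernelOp (ennMarkov w))^[n] (A.indicator 1) x₀
  have hvol : 0 ≤ setVol (vtxWeight w) A :=
    tsum_nonneg (Set.indicator_nonneg fun v _ => (hpos v).le)
  have hW : 0 < vtxWeight w x₀ := hpos x₀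
  have hH : H ^ 2 * ENNReal.ofReal (vtxWeight w x₀) ≤
      ENNReal.ofReal (ρ ^ n * Real.sqrt (setVol (vtxWeight w) A / vtxWeight w x₀)) ^ 2 *
        ENNReal.ofReal (vtxWeight w x₀) := by
    calc H ^ 2 * ENNReal.ofReal (vtxWeight w x₀)
        ≤ normSq w ((kernelOp (ennMarkov w))^[n] (A.indicator 1)) := ENNReal.le_tsum x₀
      _ ≤ ENNReal.ofReal (ρ ^ 2) ^ n * ENNReal.ofReal (setVol (vtxWeight w) A) := by
        rw [← normSq_indicator_one hpos hA]
        exact normSq_kernelOp_iterate_le hsymm hnn hsum hpos hρ hP _ n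
      _ = _ := by
        rw [← ENNReal.ofReal_pow (sq_nonneg ρ), ← ENNReal.ofReal_pow (by positivity),
          ← ENNReal.ofReal_mul (by positivity), ← ENNReal.ofReal_mul (by positivity),
          mul_pow, Real.sq_sqrt (div_nonneg hvol hW.le), mul_assoc, div_mul_cancel₀ _ hW.ne',
          ← pow_mul, ← pow_mul, mul_comm 2 n]
  refine (measure_eval_mem_le_kernelOp_iterate hμ' A n).trans
    ((ENNReal.pow_le_pow_left_iff two_ne_zero).1 ?_)
  exact (ENNReal.mul_le_mul_iff_left (by simpa using hW) ENNReal.ofReal_ne_top).1 hH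

end WeightedGraph

section Growth

variable {W f : V → ℝ} {g : ℝ}

-- A non-summable sublevel set, and every larger one, has junk `tsum` `0`; that would force `g = 0`.
lemma summable_indicator_sublevel (hW : ∀ v, 0 ≤ W v)
    (hgrow : limsup (fun n : ℕ => setVol W {u | f u ≤ n} ^ (n : ℝ)⁻¹) atTop = g) (hg : g ≠ 0)
    (t : ℝ) : Summable ({u | f u ≤ t}.indicator W) := by
  by_contra hns
  have hzero : ∀ᶠ n : ℕ in atTop, setVol W {u | f u ≤ n} ^ (n : ℝ)⁻¹ = 0 := by
    filter_upwards [eventually_ge_atTop ⌈t⌉₊, eventually_gt_atTop 0] with n htn hn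
    have hns' : ¬ Summable ({u | f u ≤ n}.indicator W) := fun hs => hns <|
      hs.of_nonneg_of_le (Set.indicator_nonneg fun v _ => hW v)
        (Set.indicator_le_indicator_of_subset (fun u hu => hu.trans ((Nat.le_ceil t).trans
          (Nat.cast_le.2 htn))) hW)
    rw [setVol, tsum_eq_zero_of_not_summable hns', Real.zero_rpow (by positivity)]
  exact hg (hgrow ▸ (limsup_congr hzero).trans (limsup_const 0))

lemma countable_of_summable_sublevel (hW : ∀ v, 0 < W v)
    (hsumm : ∀ t : ℝ, Summable ({u | f u ≤ t}.indicator W)) : Countable V := by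
  have hcover : (Set.univ : Set V) ⊆ ⋃ n : ℕ, {u | f u ≤ n} := fun v _ =>
    Set.mem_iUnion.2 ⟨⌈f v⌉₊, Nat.le_ceil (f v)⟩
  refine Set.countable_univ_iff.1 (Set.Countable.mono hcover (Set.countable_iUnion fun n => ?_))
  refine (hsumm n).countable_support.mono fun u hu => ?_
  rw [Function.mem_support, Set.indicator_of_mem hu]
  exact (hW u).ne'

lemma exists_setVol_sublevel_le (hW : ∀ v, 0 ≤ W v)
    (hsumm : ∀ t : ℝ, Summable ({u | f u ≤ t}.indicator W))
    (hgrow : limsup (fun n : ℕ => setVol W {u | f u ≤ n} ^ (n : ℝ)⁻¹) atTop = g) (hg : 1 < g)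
    {g' : ℝ} (hgg' : g < g') :
    ∃ K : ℝ, ∀ t : ℝ, 0 ≤ t → setVol W {u | f u ≤ t} ≤ K * g' ^ t := by
  have hbdd : IsBoundedUnder (· ≤ ·) atTop
      fun n : ℕ => setVol W {u | f u ≤ n} ^ (n : ℝ)⁻¹ := by
    by_contra h
    -- the junk `limsup` of an unbounded sequence is `0`
    linarith [hgrow ▸ Real.limsup_of_not_isBoundedUnder h]
  obtain ⟨N, hN⟩ := eventually_atTop.1 <|
    (eventually_lt_of_limsup_lt (hgrow ▸ hgg') hbdd).and (eventually_gt_atTop 0)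
  have hvol0 : ∀ t, 0 ≤ setVol W {u | f u ≤ t} := fun t =>
    tsum_nonneg (Set.indicator_nonneg fun v _ => hW v)
  have hmono : Monotone fun t => setVol W {u | f u ≤ t} := fun s t hst =>
    (hsumm s).tsum_le_tsum (Set.indicator_le_indicator_of_subset
      (fun u hu => le_trans hu hst) hW) (hsumm t)
  refine ⟨g' ^ ((N : ℝ) + 1), fun t ht => ?_⟩
  set n := max N ⌈t⌉₊
  have hn : setVol W {u | f u ≤ n} ≤ g' ^ (n : ℝ) := by
    obtain ⟨hlt, hn0⟩ := hN n (le_max_left _ _)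
    exact ((Real.rpow_inv_lt_iff_of_pos (hvol0 _) (by linarith) (by positivity)).1 hlt).le
  have hn_le : (n : ℝ) ≤ (N + 1) + t := by
    rcases max_cases N ⌈t⌉₊ with ⟨h, _⟩ | ⟨h, _⟩ <;> rw [show n = _ from h]
    · linarith
    · linarith [Nat.ceil_lt_add_one ht]
  calc setVol W {u | f u ≤ t} ≤ setVol W {u | f u ≤ n} :=
        hmono ((Nat.le_ceil t).trans (Nat.cast_le.2 (le_max_right _ _)))
    _ ≤ g' ^ (n : ℝ) := hn
    _ ≤ g' ^ ((N : ℝ) + 1 + t) := Real.rpow_le_rpow_of_exponent_le (by linarith) hn_le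
    _ = g' ^ ((N : ℝ) + 1) * g' ^ t := Real.rpow_add (by linarith) _ _

end Growth

lemma ae_eventually_notMem_of_le_geometric {α : Type*} [MeasurableSpace α] {μ : Measure α}
    {s : ℕ → Set α} {C r : ℝ} (hC : 0 ≤ C) (hr0 : 0 ≤ r) (hr1 : r < 1)
    (hs : ∀ n, μ (s n) ≤ ENNReal.ofReal (C * r ^ n)) : ∀ᵐ x ∂μ, ∀ᶠ n in atTop, x ∉ s n := by
  refine ae_eventually_notMem (ne_top_of_le_ne_top ?_ (ENNReal.tsum_le_tsum hs))
  rw [← ENNReal.ofReal_tsum_of_nonneg (fun n => by positivity)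
    ((summable_geometric_of_lt_one hr0 hr1).mul_left C)]
  exact ENNReal.ofReal_ne_top

lemma ofReal_le_liminf_div {a u : ℕ → ℝ} {c : ℝ} (hu : Tendsto u atTop (𝓝 c))
    (h : ∀ k, ∀ᶠ n in atTop, u k * n < a n) :
    ENNReal.ofReal c ≤ liminf (fun n : ℕ => ENNReal.ofReal (a n / n)) atTop := by
  refine le_of_tendsto' (ENNReal.tendsto_ofReal hu) fun k => ?_
  refine le_liminf_of_le (by isBoundedDefault) ?_
  filter_upwards [h k, eventually_gt_atTop 0] with n hn hn0
  exact ENNReal.ofReal_le_ofReal ((le_div_iff₀ (by positivity)).2 hn.le)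

section Speed

variable {w : V → V → ℝ}

theorem ae_eventually_mul_lt_of_mul_log_lt [MeasurableSpace V] [Countable V]
    (hsymm : ∀ u v, w u v = w v u) (hnn : ∀ u v, 0 ≤ w u v) (hsum : ∀ v, Summable (w v))
    (hpos : ∀ v, 0 < vtxWeight w v) {ρ : ℝ} (hρ : 0 < ρ) (hP : MarkovNormLE w ρ)
    {f : V → ℝ} (hsumm : ∀ t : ℝ, Summable ({u | f u ≤ t}.indicator (vtxWeight w)))
    {g : ℝ} (hg : 1 < g)
    (hgrow : limsup (fun n : ℕ => setVol (vtxWeight w) {u | f u ≤ n} ^ (n : ℝ)⁻¹) atTop = g)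
    {x₀ : V} {μ : Measure (ℕ → V)} (hμ : IsWalkLaw w x₀ μ)
    {ε : ℝ} (hε : 0 < ε) (hεg : ε * Real.log g < -2 * Real.log ρ) :
    ∀ᵐ ω ∂μ, ∀ᶠ n : ℕ in atTop, ε * n < f (ω n) := by
  obtain ⟨g', hgg', hg'⟩ := exists_between
    (show g < Real.exp (-2 * Real.log ρ / ε) by
      rwa [← Real.log_lt_iff_lt_exp (by linarith), lt_div_iff₀ hε, mul_comm])
  have hg'0 : 0 < g' := by linarith
  have hr : ρ * g' ^ (ε / 2) < 1 := by
    rw [← Real.log_lt_iff_lt_exp hg'0, lt_div_iff₀ hε] at hg'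
    rw [← Real.log_neg_iff (by positivity), Real.log_mul hρ.ne' (by positivity),
      Real.log_rpow hg'0]
    linarith
  obtain ⟨K, hK⟩ := exists_setVol_sublevel_le (fun v => (hpos v).le) hsumm hgrow hg hgg'
  have hbound : ∀ n : ℕ, μ {ω | f (ω n) ≤ ε * n} ≤
      ENNReal.ofReal (Real.sqrt (K / vtxWeight w x₀) * (ρ * g' ^ (ε / 2)) ^ n) := fun n => by
    refine (measure_walk_mem_le (A := {u | f u ≤ ε * n}) hsymm hnn hsum hpos hρ hP hμ
      (hsumm _) n).trans (ENNReal.ofReal_le_ofReal ?_)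
    have hsq : g' ^ (ε * n) = ((g' ^ (ε / 2)) ^ n) ^ 2 := by
      rw [← pow_mul, ← Real.rpow_natCast, ← Real.rpow_mul hg'0.le]
      push_cast
      ring_nf
    calc ρ ^ n * Real.sqrt (setVol (vtxWeight w) {u | f u ≤ ε * n} / vtxWeight w x₀)
        ≤ ρ ^ n * Real.sqrt (K * g' ^ (ε * n) / vtxWeight w x₀) := by
          gcongr
          · exact (hpos x₀).le
          · exact hK _ (by positivity)
      _ = Real.sqrt (K / vtxWeight w x₀) * (ρ * g' ^ (ε / 2)) ^ n := by
          rw [mul_div_right_comm, Real.sqrt_mul' _ (by positivity), hsq,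
            Real.sqrt_sq (by positivity)]
          ring
  filter_upwards [ae_eventually_notMem_of_le_geometric (Real.sqrt_nonneg _) (by positivity) hr
    hbound] with ω hω
  exact hω.mono fun n hn => lt_of_not_ge hn

end Speed

theorem speed_from_norm_general {V : Type*} [MeasurableSpace V] (w : V → V → ℝ)
    (hsymm : ∀ u v, w u v = w v u) (hnn : ∀ u v, 0 ≤ w u v)
    (hsum : ∀ v, Summable (w v)) (hpos : ∀ v, 0 < vtxWeight w v)
    (ρ : ℝ) (hρ0 : 0 < ρ) (hρ1 : ρ < 1)
    -- `‖P‖ ≤ ρ < 1` in quadratic-form formulation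
    (hP : ∀ f : V → ℝ, (Function.support f).Finite →
      ∑' v, (∑' u, markov w v u * f u) ^ 2 * vtxWeight w v ≤
        ρ ^ 2 * ∑' v, (f v) ^ 2 * vtxWeight w v)
    (f : V → ℝ)
    (g : ℝ) (hg : 1 < g)
    -- `g = limsup |f⁻¹([0,n])|^{1/n}`
    (hgrow : Filter.limsup
      (fun n : ℕ =>
        (∑' v : V, Set.indicator {u | f u ≤ n} (vtxWeight w) v) ^ ((n : ℝ)⁻¹))
      Filter.atTop = g)
    (x₀ : V) (μ : Measure (ℕ → V))
    -- `μ` is the law of the random walk started at `x₀`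
    (hμ : ∀ (n : ℕ) (γ : ℕ → V),
      μ {ω | ∀ k ≤ n, ω k = γ k} =
        ENNReal.ofReal ((if γ 0 = x₀ then (1 : ℝ) else 0) *
          ∏ k ∈ Finset.range n, markov w (γ k) (γ (k + 1)))) :
    ∀ᵐ ω ∂μ,
      ENNReal.ofReal (-2 * Real.log ρ / Real.log g) ≤
        Filter.liminf (fun n : ℕ => ENNReal.ofReal (f (ω n) / n)) Filter.atTop := by
  have hsumm := summable_indicator_sublevel (fun v => (hpos v).le) hgrow (by linarith)
  have : Countable V := countable_of_summable_sublevel hpos hsumm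
  have hlog : 0 < Real.log g := Real.log_pos hg
  obtain ⟨u, -, hu, hlim⟩ := exists_seq_strictMono_tendsto'
    (div_pos (by linarith [Real.log_neg hρ0 hρ1]) hlog : 0 < -2 * Real.log ρ / Real.log g)
  have hae : ∀ k, ∀ᵐ ω ∂μ, ∀ᶠ n : ℕ in atTop, u k * n < f (ω n) := fun k =>
    ae_eventually_mul_lt_of_mul_log_lt hsymm hnn hsum hpos hρ0 hP hsumm hg hgrow hμ (hu k).1
      ((lt_div_iff₀ hlog).1 (hu k).2)
  filter_upwards [ae_all_iff.2 hae] with ω hω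
  exact ofReal_le_liminf_div hlim hω

theorem speed_from_norm {V : Type*} [MeasurableSpace V] (w : V → V → ℝ)
    (hsymm : ∀ u v, w u v = w v u) (hnn : ∀ u v, 0 ≤ w u v)
    (hsum : ∀ v, Summable (w v)) (hpos : ∀ v, 0 < vtxWeight w v)
    (ρ : ℝ) (hρ0 : 0 < ρ) (hρ1 : ρ < 1)
    -- `‖P‖ ≤ ρ < 1` in quadratic-form formulation
    (hP : ∀ f : V → ℝ, (Function.support f).Finite →
      ∑' v, (∑' u, markov w v u * f u) ^ 2 * vtxWeight w v ≤
        ρ ^ 2 * ∑' v, (f v) ^ 2 * vtxWeight w v)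
    (f : V → ℝ) (hf : ∀ v, 0 ≤ f v)
    (g : ℝ) (hg : 1 < g)
    -- `g = limsup |f⁻¹([0,n])|^{1/n}`
    (hgrow : Filter.limsup
      (fun n : ℕ =>
        (∑' v : V, Set.indicator {u | f u ≤ n} (vtxWeight w) v) ^ ((n : ℝ)⁻¹))
      Filter.atTop = g)
    (x₀ : V) (μ : Measure (ℕ → V)) (hprob : IsProbabilityMeasure μ)
    -- `μ` is the law of the random walk started at `x₀`
    (hμ : ∀ (n : ℕ) (γ : ℕ → V),
      μ {ω | ∀ k ≤ n, ω k = γ k} =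
        ENNReal.ofReal ((if γ 0 = x₀ then (1 : ℝ) else 0) *
          ∏ k ∈ Finset.range n, markov w (γ k) (γ (k + 1)))) :
    ∀ᵐ ω ∂μ,
      ENNReal.ofReal (-2 * Real.log ρ / Real.log g) ≤
        Filter.liminf (fun n : ℕ => ENNReal.ofReal (f (ω n) / n)) Filter.atTop :=
  speed_from_norm_general w hsymm hnn hsum hpos ρ hρ0 hρ1 hP f g hg hgrow x₀ μ hμ
end
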